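/- Every 1-error-correcting code C over GF(q) of length s can be embedded in a 1-perfect code of length n = (q^{s+1}-1)/(q-1): there exists a 1-perfect code P ⊂ F^n such that C = { x ∈ F^s : (1, x, 0^{n-s-1}) ∈ P }. -/

import Mathlib

variable {F : Type*} [Field F] [Fintype F] [DecidableEq F] {m : ℕ}

def IsProj (α : Fin m → F) : Prop :=
  ∃ i, α i = 1 ∧ ∀ j < i, α j = 0

instance : DecidablePred (IsProj (F := F) (m := m)) :=
  fun α => decidable_of_iff (∃ i, α i = 1 ∧ ∀ j < i, α j = 0) Iff.rfl

/-- The projective points: nonzero vectors with first nonzero coordinate 1. -/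
abbrev PA (F : Type*) [Field F] [Fintype F] [DecidableEq F] (m : ℕ) : Type _ :=
  {α : Fin m → F // IsProj α}

/-- The Hamming code of length (q^m-1)/(q-1). -/
def Hcode (F : Type*) [Field F] [Fintype F] [DecidableEq F] (m : ℕ) : Set (PA F m → F) :=
  {c | ∑ α : PA F m, c α • (α : Fin m → F) = 0}

/-- Zero-extension of a vector of F^m to a word indexed by PA F m. -/
def bar (α : Fin m → F) : PA F m → F :=
  fun β => ∑ i, if (β : Fin m → F) = Pi.single i 1 then α i else 0

/-- The linear δ-component: span of the weight-3 codewords with value 1 at δ. -/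
def Rcomp (δ : PA F m) : Submodule F (PA F m → F) :=
  Submodule.span F {c | c ∈ Hcode F m ∧ hammingNorm c = 3 ∧ c δ = 1}

/-- A 1-perfect code: radius-1 balls around codewords partition the space. -/
def IsPerfect {ι : Type*} [Fintype ι] (P : Set (ι → F)) : Prop :=
  ∀ z : ι → F, ∃! c, c ∈ P ∧ hammingDist z c ≤ 1

/-- A 1-code: radius-1 balls around codewords are pairwise disjoint. -/
def IsOneCode {ι : Type*} [Fintype ι] (C : Set (ι → F)) : Prop :=
  ∀ x ∈ C, ∀ y ∈ C, x ≠ y → ∀ z, ¬(hammingDist x z ≤ 1 ∧ hammingDist y z ≤ 1)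

/-- The radius-1 neighborhood of a set of words. -/
def nbhd {ι : Type*} [Fintype ι] (M : Set (ι → F)) : Set (ι → F) :=
  {y | ∃ x ∈ M, hammingDist x y ≤ 1}

/-- The projective point corresponding to the standard basis vector π^(i). -/
def singleProj (i : Fin m) : PA F m :=
  ⟨Pi.single i 1, i, by simp, fun j hj => Pi.single_eq_of_ne (Fin.ne_of_lt hj) 1⟩

/-- The projective point (1, x). -/
def consProj {s : ℕ} (x : Fin s → F) : PA F (s+1) :=
  ⟨Fin.cons 1 x, 0, by simp, fun j hj => absurd hj (by simp)⟩

/-!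
The Hamming code is perfect, and `bar (1, x)` lies at distance one from its codeword
`bar (1, x) - e_(1, x)`. For a projective point `δ`, translating the span `Rcomp δ` of the
weight-three codewords through `δ` by a multiple of `e_δ` does not change its radius-one
neighbourhood. Hence for every `x ∈ C` the coset `bar (1, x) - e_(1, x) + Rcomp (1, x)` of the
Hamming code may be replaced by its translate by `e_(1, x)`, which contains `bar (1, x)`: the code
stays perfect because these cosets are pairwise disjoint, which is where the minimum distance three
of `C` enters. No other `bar (1, y)` enters the code, since its syndrome `(1, y)` is that of
`e_(1, y)` alone.
-/

open scoped Pointwise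

section HammingSpace

variable {ι G : Type*} [Fintype ι] [DecidableEq G]

theorem hammingDist_update_le [DecidableEq ι] (x : ι → G) (i : ι) (a : G) :
    hammingDist x (Function.update x i a) ≤ 1 := by
  refine (Finset.card_le_card fun j hj => ?_).trans (Finset.card_singleton i).le
  by_contra hji
  simp [Function.update_of_ne (Finset.mem_singleton.not.1 hji)] at hj

theorem hammingDist_update_lt [DecidableEq ι] {x y : ι → G} {i : ι} (hi : x i ≠ y i) :
    hammingDist (Function.update x i (y i)) y < hammingDist x y := by
  refine Finset.card_lt_card (Finset.ssubset_iff_of_subset (fun j hj => ?_) |>.2 ⟨i, ?_, ?_⟩)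
  · obtain rfl | hji := eq_or_ne j i
    · simp at hj
    · simpa [Function.update_of_ne hji] using hj
  · simpa using hi
  · simp

theorem exists_hammingDist_le_one_of_le_two {x y : ι → G} (h : hammingDist x y ≤ 2) :
    ∃ z, hammingDist x z ≤ 1 ∧ hammingDist z y ≤ 1 := by
  classical
  obtain rfl | hxy := eq_or_ne x y
  · exact ⟨x, by simp, by simp⟩
  obtain ⟨i, hi⟩ := Function.ne_iff.1 hxy
  exact ⟨_, hammingDist_update_le x i (y i), by have := hammingDist_update_lt hi; omega⟩

theorem IsOneCode.three_le_hammingDist {C : Set (ι → G)} (hC : IsOneCode C) {x y : ι → G}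
    (hx : x ∈ C) (hy : y ∈ C) (hxy : x ≠ y) : 3 ≤ hammingDist x y := by
  by_contra! h
  obtain ⟨z, hxz, hzy⟩ := exists_hammingDist_le_one_of_le_two (by omega : hammingDist x y ≤ 2)
  exact hC x hx y hy hxy z ⟨hxz, by rwa [hammingDist_comm]⟩

theorem IsPerfect.eq_of_hammingDist_le_one {P : Set (ι → G)} (hP : IsPerfect P)
    {z c c' : ι → G} (hc : c ∈ P) (hc' : c' ∈ P) (hzc : hammingDist z c ≤ 1)
    (hzc' : hammingDist z c' ≤ 1) : c = c' :=
  (hP z).unique ⟨hc, hzc⟩ ⟨hc', hzc'⟩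

variable [AddGroup G]

theorem hammingNorm_single_le [DecidableEq ι] (i : ι) (a : G) :
    hammingNorm (Pi.single i a : ι → G) ≤ 1 := by
  refine (Finset.card_le_card fun j hj => ?_).trans (Finset.card_singleton i).le
  by_contra hji
  simp [Pi.single_eq_of_ne (Finset.mem_singleton.not.1 hji)] at hj

theorem exists_eq_single_of_hammingNorm_le_one [DecidableEq ι] [Nonempty ι] {u : ι → G}
    (h : hammingNorm u ≤ 1) : ∃ i a, u = Pi.single i a := by
  obtain rfl | hu := eq_or_ne u 0
  · exact ⟨Classical.arbitrary ι, 0, by simp⟩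
  obtain ⟨i, hi⟩ := Function.ne_iff.1 hu
  refine ⟨i, u i, funext fun j => ?_⟩
  obtain rfl | hji := eq_or_ne j i
  · simp
  rw [Pi.single_eq_of_ne hji]
  by_contra hj
  exact hji (Finset.card_le_one.1 h j (by simpa using hj) i (by simpa using hi))

theorem hammingDist_le_one_iff [DecidableEq ι] [Nonempty ι] {x y : ι → G} :
    hammingDist x y ≤ 1 ↔ ∃ i a, y = x + Pi.single i a := by
  rw [hammingDist_eq_hammingNorm]
  constructor
  · rintro h
    obtain ⟨i, a, hu⟩ := exists_eq_single_of_hammingNorm_le_one h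
    exact ⟨i, a, by rw [← hu, add_neg_cancel_left]⟩
  · rintro ⟨i, a, rfl⟩
    simpa using hammingNorm_single_le i a

theorem hammingNorm_single_add_single_add_single [DecidableEq ι] {i j k : ι} (hij : i ≠ j)
    (hik : i ≠ k) (hjk : j ≠ k) {a b c : G} (ha : a ≠ 0) (hb : b ≠ 0) (hc : c ≠ 0) :
    hammingNorm (Pi.single i a + Pi.single j b + Pi.single k c : ι → G) = 3 := by
  refine Finset.card_eq_three.2 ⟨i, j, k, hij, hik, hjk, ?_⟩
  ext p
  obtain rfl | hpi := eq_or_ne p i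
  · simp [Pi.single_eq_of_ne hij, Pi.single_eq_of_ne hik, ha]
  obtain rfl | hpj := eq_or_ne p j
  · simp [Pi.single_eq_of_ne hij.symm, Pi.single_eq_of_ne hjk, hb]
  obtain rfl | hpk := eq_or_ne p k
  · simp [Pi.single_eq_of_ne hik.symm, Pi.single_eq_of_ne hjk.symm, hc]
  simp [Pi.single_eq_of_ne, hpi, hpj, hpk]

theorem exists_eq_single_add_single_add_single [DecidableEq ι] {u : ι → G}
    (h : hammingNorm u = 3) {i : ι} (hi : u i ≠ 0) :
    ∃ j k, i ≠ j ∧ i ≠ k ∧ j ≠ k ∧ u j ≠ 0 ∧ u k ≠ 0 ∧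
      u = Pi.single i (u i) + Pi.single j (u j) + Pi.single k (u k) := by
  set S := Finset.univ.filter fun p => u p ≠ 0
  have hiS : i ∈ S := by simpa [S] using hi
  obtain ⟨j, k, hjk, hS⟩ := Finset.card_eq_two.1 <| by
    rw [Finset.card_erase_of_mem hiS]
    exact congrArg (· - 1) h
  have hj : j ∈ S.erase i := hS ▸ by simp
  have hk : k ∈ S.erase i := hS ▸ by simp
  simp only [Finset.mem_erase, S, Finset.mem_filter, Finset.mem_univ, true_and] at hj hk
  refine ⟨j, k, hj.1.symm, hk.1.symm, hjk, hj.2, hk.2, funext fun p => ?_⟩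
  by_cases hp : u p = 0
  · have hpi : p ≠ i := by rintro rfl; exact hi hp
    have hpj : p ≠ j := by rintro rfl; exact hj.2 hp
    have hpk : p ≠ k := by rintro rfl; exact hk.2 hp
    simp [Pi.single_eq_of_ne, hp, hpi, hpj, hpk]
  · obtain rfl | hpi := eq_or_ne p i
    · simp [Pi.single_eq_of_ne hj.1.symm, Pi.single_eq_of_ne hk.1.symm]
    have hp' : p ∈ S.erase i := by simpa [S] using ⟨hpi, hp⟩
    rw [hS] at hp'
    rcases Finset.mem_insert.1 hp' with rfl | hp'
    · simp [Pi.single_eq_of_ne hpi, Pi.single_eq_of_ne hjk]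
    obtain rfl := Finset.mem_singleton.1 hp'
    simp [Pi.single_eq_of_ne hpi, Pi.single_eq_of_ne hjk.symm]

theorem hammingDist_add_left (v x y : ι → G) : hammingDist (v + x) (v + y) = hammingDist x y :=
  hammingDist_comp (fun i => (v i + ·)) fun i => add_right_injective (v i)

theorem IsPerfect.vadd {P : Set (ι → G)} (hP : IsPerfect P) (v : ι → G) :
    IsPerfect (v +ᵥ P) := by
  intro z
  obtain ⟨c, ⟨hc, hzc⟩, huniq⟩ := hP (-v + z)
  have hdist : ∀ c', hammingDist z (v + c') = hammingDist (-v + z) c' := fun c' => by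
    rw [← hammingDist_add_left v (-v + z), add_neg_cancel_left]
  refine ⟨v + c, ⟨Set.vadd_mem_vadd_set hc, (hdist c).trans_le hzc⟩, ?_⟩
  rintro _ ⟨⟨c', hc', rfl⟩, hzc'⟩
  rw [huniq c' ⟨hc', (hdist c').symm.trans_le hzc'⟩]
  rfl

theorem nbhd_vadd (v : ι → G) (M : Set (ι → G)) : nbhd (v +ᵥ M) = v +ᵥ nbhd M := by
  ext y
  rw [Set.mem_vadd_set_iff_neg_vadd_mem]
  constructor
  · rintro ⟨_, ⟨x, hx, rfl⟩, hxy⟩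
    refine ⟨x, hx, ?_⟩
    rwa [← hammingDist_add_left v, vadd_eq_add, add_neg_cancel_left]
  · rintro ⟨x, hx, hxy⟩
    refine ⟨v + x, Set.vadd_mem_vadd_set hx, ?_⟩
    rwa [← hammingDist_add_left v, vadd_eq_add, add_neg_cancel_left] at hxy

theorem IsPerfect.switch {J : Type*} {Q : Set (ι → G)} (hQ : IsPerfect Q) {K : J → Set (ι → G)}
    (hKQ : ∀ j, K j ⊆ Q) (hK : Pairwise fun i j => Disjoint (K i) (K j)) {v : J → ι → G}
    (hv : ∀ j, nbhd (v j +ᵥ K j) = nbhd (K j)) :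
    IsPerfect ((Q \ ⋃ j, K j) ∪ ⋃ j, v j +ᵥ K j) := by
  intro z
  obtain ⟨c, ⟨hcQ, hzc⟩, hc_unique⟩ := hQ z
  have mem_of_switched : ∀ j, ∀ w ∈ v j +ᵥ K j, hammingDist z w ≤ 1 → c ∈ K j := by
    intro j w hw hzw
    obtain ⟨c', hc'K, hc'z⟩ : z ∈ nbhd (K j) :=
      hv j ▸ ⟨w, hw, by rwa [hammingDist_comm]⟩
    rwa [hc_unique c' ⟨hKQ j hc'K, by rwa [hammingDist_comm]⟩] at hc'K
  by_cases hc : ∃ j, c ∈ K j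
  · obtain ⟨j, hcj⟩ := hc
    obtain ⟨w, hw, hwz⟩ : z ∈ nbhd (v j +ᵥ K j) :=
      (hv j).symm ▸ ⟨c, hcj, by rwa [hammingDist_comm]⟩
    refine ⟨w, ⟨Or.inr (Set.mem_iUnion.2 ⟨j, hw⟩), by rwa [hammingDist_comm]⟩, ?_⟩
    rintro w' ⟨hw' | hw', hzw'⟩
    · exact absurd (Set.mem_iUnion.2 ⟨j, hc_unique w' ⟨hw'.1, hzw'⟩ ▸ hcj⟩) hw'.2
    · obtain ⟨j', hw'j'⟩ := Set.mem_iUnion.1 hw'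
      obtain rfl : j' = j := hK.eq fun hdisj =>
        Set.disjoint_left.1 hdisj (mem_of_switched j' w' hw'j' hzw') hcj
      exact (hQ.vadd (v j')).eq_of_hammingDist_le_one (Set.vadd_set_mono (hKQ j') hw'j')
        (Set.vadd_set_mono (hKQ j') hw) hzw' (by rwa [hammingDist_comm])
  · simp only [not_exists] at hc
    refine ⟨c, ⟨Or.inl ⟨hcQ, by simpa using hc⟩, hzc⟩, ?_⟩
    rintro w ⟨hw | hw, hzw⟩
    · exact hc_unique w ⟨hw.1, hzw⟩
    · obtain ⟨j, hwj⟩ := Set.mem_iUnion.1 hw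
      exact absurd (mem_of_switched j w hwj hzw) (hc j)

end HammingSpace

namespace PA

theorem coe_ne_zero (p : PA F m) : (p : Fin m → F) ≠ 0 := by
  obtain ⟨i, hi, -⟩ := p.2
  exact Function.ne_iff.2 ⟨i, by simp [hi]⟩

theorem eq_and_eq_of_smul_eq_smul {p q : PA F m} {a b : F} (ha : a ≠ 0)
    (h : a • (p : Fin m → F) = b • (q : Fin m → F)) : p = q ∧ a = b := by
  obtain ⟨i, hpi, hp⟩ := p.2
  obtain ⟨j, hqj, hq⟩ := q.2
  have hb : b ≠ 0 := by
    rintro rfl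
    simpa [hpi, ha] using congrFun h i
  have hij : i = j := by
    rcases lt_trichotomy i j with hlt | rfl | hlt
    · simpa [hpi, hq i hlt, ha] using congrFun h i
    · rfl
    · simpa [hqj, hp j hlt, hb] using (congrFun h j).symm
  subst hij
  have hab : a = b := by simpa [hpi, hqj] using congrFun h i
  subst hab
  exact ⟨Subtype.ext (smul_right_injective _ ha h), rfl⟩

theorem exists_smul_eq {v : Fin m → F} (hv : v ≠ 0) :
    ∃ (p : PA F m) (a : F), a ≠ 0 ∧ a • (p : Fin m → F) = v := by
  have hS : (Finset.univ.filter fun i => v i ≠ 0).Nonempty := by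
    obtain ⟨i, hi⟩ := Function.ne_iff.1 hv
    exact ⟨i, by simpa using hi⟩
  set i := (Finset.univ.filter fun i => v i ≠ 0).min' hS
  have hi : v i ≠ 0 := by simpa using Finset.min'_mem _ hS
  refine ⟨⟨(v i)⁻¹ • v, i, by simp [hi], fun j hj => ?_⟩, v i, hi, by simp [smul_smul, hi]⟩
  have : v j = 0 := by
    by_contra hvj
    exact absurd (Finset.min'_le _ j (by simpa using hvj)) (not_le.2 hj)
  simp [this]

instance : Nonempty (PA F (m + 1)) := ⟨singleProj 0⟩

end PA

def syndrome (F : Type*) [Field F] [Fintype F] [DecidableEq F] (m : ℕ) :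
    (PA F m → F) →ₗ[F] (Fin m → F) :=
  Fintype.linearCombination F (↑)

theorem mem_Hcode_iff {c : PA F m → F} : c ∈ Hcode F m ↔ syndrome F m c = 0 := Iff.rfl

theorem syndrome_single (p : PA F m) (a : F) :
    syndrome F m (Pi.single p a) = a • (p : Fin m → F) :=
  Fintype.linearCombination_apply_single F _ p a

theorem single_eq_single_of_syndrome_eq {p q : PA F m} {a b : F}
    (h : syndrome F m (Pi.single p a) = syndrome F m (Pi.single q b)) :
    (Pi.single p a : PA F m → F) = Pi.single q b := by
  rw [syndrome_single, syndrome_single] at h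
  obtain rfl | ha := eq_or_ne a 0
  · obtain rfl : b = 0 := by simpa [PA.coe_ne_zero] using h.symm
    simp
  · obtain ⟨rfl, rfl⟩ := PA.eq_and_eq_of_smul_eq_smul ha h
    rfl

theorem exists_syndrome_single_eq [Nonempty (PA F m)] (v : Fin m → F) :
    ∃ (p : PA F m) (a : F), syndrome F m (Pi.single p a) = v := by
  obtain rfl | hv := eq_or_ne v 0
  · exact ⟨Classical.arbitrary _, 0, by simp⟩
  obtain ⟨p, a, -, hpa⟩ := PA.exists_smul_eq hv
  exact ⟨p, a, by rw [syndrome_single, hpa]⟩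

/-- Each syndrome is that of exactly one word of weight at most one. -/
theorem isPerfect_Hcode [Nonempty (PA F m)] : IsPerfect (Hcode F m) := by
  intro z
  obtain ⟨p, a, hpa⟩ := exists_syndrome_single_eq (-syndrome F m z)
  refine ⟨z + Pi.single p a, ⟨?_, hammingDist_le_one_iff.2 ⟨p, a, rfl⟩⟩, ?_⟩
  · rw [mem_Hcode_iff, map_add, hpa, add_neg_cancel]
  rintro c ⟨hc, hzc⟩
  obtain ⟨q, b, rfl⟩ := hammingDist_le_one_iff.1 hzc
  rw [mem_Hcode_iff, map_add, add_eq_zero_iff_neg_eq, ← hpa] at hc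
  rw [single_eq_single_of_syndrome_eq hc.symm]

theorem bar_eq_sum (α : Fin m → F) : bar α = ∑ i, Pi.single (singleProj i : PA F m) (α i) := by
  funext β
  simp only [bar, Finset.sum_apply, Pi.single_apply]
  refine Finset.sum_congr rfl fun i _ => if_congr ?_ rfl rfl
  exact ⟨fun h => Subtype.ext h, fun h => h ▸ rfl⟩

open Classical in
noncomputable def syndromeOn (E : Submodule F (Fin m → F)) : (PA F m → F) →ₗ[F] (Fin m → F) :=
  Fintype.linearCombination F fun p : PA F m => if (p : Fin m → F) ∈ E then (p : Fin m → F) else 0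

theorem syndromeOn_single_of_mem {E : Submodule F (Fin m → F)} {p : PA F m}
    (hp : (p : Fin m → F) ∈ E) (a : F) : syndromeOn E (Pi.single p a) = a • (p : Fin m → F) := by
  rw [syndromeOn, Fintype.linearCombination_apply_single, if_pos hp]

theorem syndromeOn_single_of_notMem {E : Submodule F (Fin m → F)} {p : PA F m}
    (hp : (p : Fin m → F) ∉ E) (a : F) : syndromeOn E (Pi.single p a) = 0 := by
  rw [syndromeOn, Fintype.linearCombination_apply_single, if_neg hp, smul_zero]

theorem syndromeOn_top : syndromeOn (⊤ : Submodule F (Fin m → F)) = syndrome F m := by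
  simp only [syndromeOn, Submodule.mem_top, if_true]
  rfl

open Classical in
theorem syndromeOn_bar (E : Submodule F (Fin m → F)) (α : Fin m → F) :
    syndromeOn E (bar α) = fun i => if (Pi.single i 1 : Fin m → F) ∈ E then α i else 0 := by
  rw [bar_eq_sum, map_sum]
  conv_rhs => rw [← Finset.univ_sum_single (fun i => if (Pi.single i 1 : Fin m → F) ∈ E
    then α i else 0)]
  refine Finset.sum_congr rfl fun i _ => ?_
  by_cases hi : (Pi.single i 1 : Fin m → F) ∈ E
  · rw [syndromeOn_single_of_mem hi, if_pos hi]
    show α i • (Pi.single i 1 : Fin m → F) = _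
    rw [← Pi.single_smul', smul_eq_mul, mul_one]
  · rw [syndromeOn_single_of_notMem hi, if_neg hi, Pi.single_zero]

theorem syndrome_bar (α : Fin m → F) : syndrome F m (bar α) = α := by
  rw [← syndromeOn_top, syndromeOn_bar]
  simp

theorem Rcomp_le_ker_syndrome (δ : PA F m) : Rcomp δ ≤ LinearMap.ker (syndrome F m) :=
  Submodule.span_le.2 fun _ hc => LinearMap.mem_ker.2 hc.1

theorem single_add_single_add_single_mem_Rcomp {δ β γ : PA F m} (hδβ : δ ≠ β) (hδγ : δ ≠ γ)
    (hβγ : β ≠ γ) {a b c : F} (ha : a ≠ 0) (hb : b ≠ 0) (hc : c ≠ 0)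
    (h : a • (δ : Fin m → F) + b • (β : Fin m → F) + c • (γ : Fin m → F) = 0) :
    Pi.single δ a + Pi.single β b + Pi.single γ c ∈ Rcomp δ := by
  have hw : syndrome F m (Pi.single δ a + Pi.single β b + Pi.single γ c) = 0 := by
    simp only [map_add, syndrome_single, h]
  have hnormalize : a⁻¹ • (Pi.single δ a + Pi.single β b + Pi.single γ c : PA F m → F) =
      Pi.single δ 1 + Pi.single β (a⁻¹ * b) + Pi.single γ (a⁻¹ * c) := by
    simp only [smul_add, ← Pi.single_smul', smul_eq_mul, inv_mul_cancel₀ ha]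
  rw [← Submodule.smul_mem_iff _ (inv_ne_zero ha)]
  refine Submodule.subset_span ⟨by rw [mem_Hcode_iff, map_smul, hw, smul_zero], ?_, ?_⟩ <;>
    rw [hnormalize]
  · exact hammingNorm_single_add_single_add_single hδβ hδγ hβγ one_ne_zero
      (mul_ne_zero (inv_ne_zero ha) hb) (mul_ne_zero (inv_ne_zero ha) hc)
  · simp [Pi.single_eq_of_ne hδβ, Pi.single_eq_of_ne hδγ]

theorem exists_mem_Rcomp_hammingDist_le_one (δ β : PA F m) (a b : F) :
    ∃ w ∈ Rcomp δ, hammingDist w (Pi.single δ a + Pi.single β b) ≤ 1 := by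
  by_cases hdeg : β = δ ∨ a = 0 ∨ b = 0
  · refine ⟨0, zero_mem _, ?_⟩
    rw [hammingDist_zero_left]
    rcases hdeg with rfl | rfl | rfl
    · simpa [← Pi.single_add] using hammingNorm_single_le β (a + b)
    · simpa using hammingNorm_single_le β b
    · simpa using hammingNorm_single_le δ a
  push Not at hdeg
  obtain ⟨hβδ, ha, hb⟩ := hdeg
  have hne : a • (δ : Fin m → F) + b • (β : Fin m → F) ≠ 0 := fun h =>
    hβδ (PA.eq_and_eq_of_smul_eq_smul ha (eq_neg_of_add_eq_zero_left h |>.trans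
      (neg_smul b _).symm)).1.symm
  -- `γ` is the third point of the line through `δ` and `β` on which the codeword is supported.
  obtain ⟨γ, c, hc, hγ⟩ := PA.exists_smul_eq hne
  have hγδ : γ ≠ δ := by
    rintro rfl
    refine hβδ (PA.eq_and_eq_of_smul_eq_smul hb (a := b) (b := c - a) ?_).1
    rw [sub_smul, hγ, add_sub_cancel_left]
  have hγβ : γ ≠ β := by
    rintro rfl
    refine hβδ.symm (PA.eq_and_eq_of_smul_eq_smul ha (a := a) (b := c - b) ?_).1
    rw [sub_smul, hγ, add_sub_cancel_right]
  refine ⟨_, single_add_single_add_single_mem_Rcomp hβδ.symm hγδ.symm hγβ.symm ha hb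
    (neg_ne_zero.2 hc) (by rw [neg_smul, hγ, add_neg_cancel]), ?_⟩
  rw [hammingDist_eq_hammingNorm]
  convert hammingNorm_single_le γ c using 2
  rw [Pi.single_neg]
  abel

theorem nbhd_single_vadd_Rcomp_subset [Nonempty (PA F m)] (δ : PA F m) (l l' : F) :
    nbhd ((Pi.single δ l : PA F m → F) +ᵥ (Rcomp δ : Set (PA F m → F))) ⊆
      nbhd ((Pi.single δ l' : PA F m → F) +ᵥ (Rcomp δ : Set (PA F m → F))) := by
  rintro y ⟨_, ⟨r, hr, rfl⟩, hy⟩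
  obtain ⟨β, b, rfl⟩ := hammingDist_le_one_iff.1 hy
  obtain ⟨w, hw, hwd⟩ := exists_mem_Rcomp_hammingDist_le_one δ β (l - l') b
  refine ⟨_, ⟨r + w, add_mem hr hw, rfl⟩, ?_⟩
  show hammingDist (Pi.single δ l' + (r + w)) (Pi.single δ l + r + Pi.single β b) ≤ 1
  have hy : Pi.single δ l + r + Pi.single β b =
      Pi.single δ l' + r + (Pi.single δ (l - l') + Pi.single β b) := by
    rw [Pi.single_sub]
    abel
  rwa [hy, ← add_assoc, hammingDist_add_left]

theorem nbhd_single_vadd_Rcomp [Nonempty (PA F m)] (δ : PA F m) (l : F) :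
    nbhd ((Pi.single δ l : PA F m → F) +ᵥ (Rcomp δ : Set (PA F m → F))) =
      nbhd (Rcomp δ : Set (PA F m → F)) := by
  have h0 : (Pi.single δ 0 : PA F m → F) +ᵥ (Rcomp δ : Set (PA F m → F)) = Rcomp δ := by
    rw [Pi.single_zero, zero_vadd]
  have h := (nbhd_single_vadd_Rcomp_subset δ l 0).antisymm (nbhd_single_vadd_Rcomp_subset δ 0 l)
  rwa [h0] at h

/-- A weight-three codeword through `δ` lies on a line through `δ`, and a line through `δ` meets
a subspace containing `δ` either in `δ` alone or entirely. -/
theorem syndromeOn_mem_span_of_mem_Rcomp {E : Submodule F (Fin m → F)} {δ : PA F m}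
    (hδ : (δ : Fin m → F) ∈ E) {r : PA F m → F} (hr : r ∈ Rcomp δ) :
    syndromeOn E r ∈ F ∙ (δ : Fin m → F) := by
  refine (Submodule.span_le (p := (F ∙ (δ : Fin m → F)).comap (syndromeOn E)) |>.2 ?_) hr
  rintro c ⟨hcH, hc3, hcδ⟩
  obtain ⟨β, γ, -, -, hβγ, hβ, hγ, hc⟩ :=
    exists_eq_single_add_single_add_single hc3 (hcδ ▸ one_ne_zero)
  rw [hc] at hcH ⊢
  rw [mem_Hcode_iff, map_add, map_add, syndrome_single, syndrome_single, syndrome_single,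
    hcδ, one_smul] at hcH
  simp only [SetLike.mem_coe, Submodule.mem_comap, map_add, hcδ, syndromeOn_single_of_mem hδ,
    one_smul]
  by_cases hβE : (β : Fin m → F) ∈ E <;> by_cases hγE : (γ : Fin m → F) ∈ E
  · rw [syndromeOn_single_of_mem hβE, syndromeOn_single_of_mem hγE, hcH]
    exact zero_mem _
  · refine absurd ((Submodule.smul_mem_iff _ hγ).1 ?_) hγE
    rw [show c γ • (γ : Fin m → F) = -((δ : Fin m → F) + c β • (β : Fin m → F)) by
      linear_combination (norm := module) hcH]
    exact neg_mem (add_mem hδ (Submodule.smul_mem _ _ hβE))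
  · refine absurd ((Submodule.smul_mem_iff _ hβ).1 ?_) hβE
    rw [show c β • (β : Fin m → F) = -((δ : Fin m → F) + c γ • (γ : Fin m → F)) by
      linear_combination (norm := module) hcH]
    exact neg_mem (add_mem hδ (Submodule.smul_mem _ _ hγE))
  · rw [syndromeOn_single_of_notMem hβE, syndromeOn_single_of_notMem hγE, add_zero, add_zero]
    exact Submodule.mem_span_singleton_self _

section Embedding

variable {s : ℕ}

theorem coe_consProj (x : Fin s → F) :
    ((consProj x : PA F (s + 1)) : Fin (s + 1) → F) = Fin.cons 1 x := rfl

def hammingCodeword (x : Fin s → F) : PA F (s + 1) → F :=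
  bar (Fin.cons 1 x) - Pi.single (consProj x) 1

def hammingComponent (x : Fin s → F) : Set (PA F (s + 1) → F) :=
  hammingCodeword x +ᵥ (Rcomp (consProj x) : Set (PA F (s + 1) → F))

theorem syndrome_hammingCodeword (x : Fin s → F) : syndrome F (s + 1) (hammingCodeword x) = 0 := by
  rw [hammingCodeword, map_sub, syndrome_bar, syndrome_single, coe_consProj, one_smul, sub_self]

theorem syndromeOn_hammingCodeword {E : Submodule F (Fin (s + 1) → F)} {x : Fin s → F}
    (hx : (Fin.cons 1 x : Fin (s + 1) → F) ∈ E) :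
    syndromeOn E (hammingCodeword x) = syndromeOn E (bar (Fin.cons 1 x)) - Fin.cons 1 x := by
  rw [hammingCodeword, map_sub, syndromeOn_single_of_mem hx, one_smul, coe_consProj]

theorem single_succ_notMem_span {K : Type*} [Field K] {x y : Fin s → K} {j₀ j₁ j₂ : Fin s}
    (h₁₀ : j₁ ≠ j₀) (h₂₀ : j₂ ≠ j₀) (h₂₁ : j₂ ≠ j₁) (hxy : x j₂ ≠ y j₂) :
    (Pi.single j₁.succ 1 : Fin (s + 1) → K) ∉
      Submodule.span K {Fin.cons 1 x, Fin.cons 1 y, Pi.single j₀.succ 1} := by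
  intro h
  obtain ⟨a, b, c, habc⟩ := Submodule.mem_span_triple.1 h
  have h₀ := congrFun habc 0
  have h₁ := congrFun habc j₁.succ
  have h₂ := congrFun habc j₂.succ
  simp [h₁₀, h₂₀, h₂₁] at h₀ h₁ h₂
  have ha : a = 0 := by
    refine (mul_eq_zero.1 (?_ : a * (x j₂ - y j₂) = 0)).resolve_right (sub_ne_zero.2 hxy)
    linear_combination h₂ - y j₂ * h₀
  rw [ha, zero_add] at h₀
  rw [ha, h₀] at h₁
  simp at h₁

theorem syndromeOn_bar_cons_sub_notMem_span {x y : Fin s → F} {j₀ j₁ : Fin s}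
    (hj₀ : x j₀ ≠ y j₀) (hj₁ : x j₁ ≠ y j₁) {E : Submodule F (Fin (s + 1) → F)}
    (hj₀E : (Pi.single j₀.succ 1 : Fin (s + 1) → F) ∈ E)
    (hj₁E : (Pi.single j₁.succ 1 : Fin (s + 1) → F) ∉ E) :
    syndromeOn E (bar (Fin.cons 1 x)) - syndromeOn E (bar (Fin.cons 1 y)) ∉
      Submodule.span F {(Fin.cons 1 x : Fin (s + 1) → F), Fin.cons 1 y} := by
  intro hmem
  obtain ⟨a, b, hab⟩ := Submodule.mem_span_pair.1 hmem
  have h₀ := congrFun hab 0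
  have h₁ := congrFun hab j₀.succ
  have h₂ := congrFun hab j₁.succ
  simp only [syndromeOn_bar, Pi.add_apply, Pi.sub_apply, Pi.smul_apply, smul_eq_mul,
    Fin.cons_zero, Fin.cons_succ, if_pos hj₀E, if_neg hj₁E] at h₀ h₁ h₂
  have hb : b = -a := by
    split_ifs at h₀ <;> linear_combination h₀
  have ha : a = 1 := by
    refine sub_eq_zero.1 <| (mul_eq_zero.1 (?_ : (a - 1) * (x j₀ - y j₀) = 0)).resolve_right
      (sub_ne_zero.2 hj₀)
    linear_combination h₁ - y j₀ * hb
  exact hj₁ (sub_eq_zero.1 (by linear_combination h₂ - y j₁ * hb - (x j₁ - y j₁) * ha))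

/-- The two components are separated by the syndrome read only on the plane spanned by `(1, x)`,
`(1, y)` and a unit vector at a coordinate where `x` and `y` differ. -/
theorem disjoint_hammingComponent {x y : Fin s → F} (hxy : 3 ≤ hammingDist x y) :
    Disjoint (hammingComponent x) (hammingComponent y) := by
  obtain ⟨j₀, j₁, j₂, hj₀, hj₁, hj₂, h₀₁, h₀₂, h₁₂⟩ := Finset.two_lt_card_iff.1 hxy
  simp only [Finset.mem_filter, Finset.mem_univ, true_and] at hj₀ hj₁ hj₂
  set E := Submodule.span F {(Fin.cons 1 x : Fin (s + 1) → F), Fin.cons 1 y, Pi.single j₀.succ 1}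
  have hxE : (Fin.cons 1 x : Fin (s + 1) → F) ∈ E := Submodule.subset_span (by simp)
  have hyE : (Fin.cons 1 y : Fin (s + 1) → F) ∈ E := Submodule.subset_span (by simp)
  have hj₀E : (Pi.single j₀.succ 1 : Fin (s + 1) → F) ∈ E := Submodule.subset_span (by simp)
  have hj₁E : (Pi.single j₁.succ 1 : Fin (s + 1) → F) ∉ E :=
    single_succ_notMem_span h₀₁.symm h₀₂.symm h₁₂.symm hj₂
  set W := Submodule.span F {(Fin.cons 1 x : Fin (s + 1) → F), Fin.cons 1 y}
  have hxW : F ∙ (Fin.cons 1 x : Fin (s + 1) → F) ≤ W := Submodule.span_mono (by simp)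
  have hyW : F ∙ (Fin.cons 1 y : Fin (s + 1) → F) ≤ W := Submodule.span_mono (by simp)
  rw [hammingComponent, hammingComponent, Set.disjoint_left]
  rintro _ ⟨r, hr, rfl⟩ ⟨r', hr', heq⟩
  dsimp only at heq
  have hmem : syndromeOn E (bar (Fin.cons 1 x)) - syndromeOn E (bar (Fin.cons 1 y)) ∈ W := by
    have h := congrArg (syndromeOn E) heq
    rw [vadd_eq_add, vadd_eq_add, map_add, map_add, syndromeOn_hammingCodeword hxE,
      syndromeOn_hammingCodeword hyE] at h
    rw [show syndromeOn E (bar (Fin.cons 1 x)) - syndromeOn E (bar (Fin.cons 1 y)) =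
      Fin.cons 1 x - Fin.cons 1 y + syndromeOn E r' - syndromeOn E r by
        linear_combination (norm := module) -h]
    have hr₁ := syndromeOn_mem_span_of_mem_Rcomp (δ := consProj x) hxE hr
    have hr₂ := syndromeOn_mem_span_of_mem_Rcomp (δ := consProj y) hyE hr'
    rw [coe_consProj] at hr₁ hr₂
    refine sub_mem (add_mem (sub_mem ?_ ?_) (hyW hr₂)) (hxW hr₁) <;>
      exact Submodule.subset_span (by simp)
  exact syndromeOn_bar_cons_sub_notMem_span hj₀ hj₁ hj₀E hj₁E hmem

def switchedHammingCode (C : Set (Fin s → F)) : Set (PA F (s + 1) → F) :=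
  (Hcode F (s + 1) \ ⋃ x : C, hammingComponent x.1) ∪
    ⋃ x : C, (Pi.single (consProj x.1) 1 : PA F (s + 1) → F) +ᵥ hammingComponent x.1

theorem hammingComponent_subset_Hcode (x : Fin s → F) :
    hammingComponent x ⊆ Hcode F (s + 1) := by
  rintro _ ⟨r, hr, rfl⟩
  show hammingCodeword x + r ∈ _
  rw [mem_Hcode_iff, map_add, syndrome_hammingCodeword, zero_add]
  exact Rcomp_le_ker_syndrome _ hr

theorem nbhd_single_vadd_hammingComponent (x : Fin s → F) :
    nbhd ((Pi.single (consProj x) 1 : PA F (s + 1) → F) +ᵥ hammingComponent x) =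
      nbhd (hammingComponent x) := by
  rw [hammingComponent, vadd_comm, nbhd_vadd, nbhd_single_vadd_Rcomp, nbhd_vadd]

theorem isPerfect_switchedHammingCode {C : Set (Fin s → F)} (hC : IsOneCode C) :
    IsPerfect (switchedHammingCode C) :=
  isPerfect_Hcode.switch (K := fun x : C => hammingComponent x.1)
    (v := fun x : C => Pi.single (consProj x.1) 1) (fun x => hammingComponent_subset_Hcode x.1)
    (fun x y hxy => disjoint_hammingComponent <|
      hC.three_le_hammingDist x.2 y.2 (Subtype.coe_injective.ne hxy))
    (fun x => nbhd_single_vadd_hammingComponent x.1)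

theorem bar_cons_mem_switchedHammingCode_iff {C : Set (Fin s → F)} (x : Fin s → F) :
    bar (Fin.cons 1 x) ∈ switchedHammingCode C ↔ x ∈ C := by
  constructor
  · rintro (⟨hH, -⟩ | hx)
    · rw [mem_Hcode_iff, syndrome_bar] at hH
      simpa using congrFun hH 0
    · obtain ⟨⟨y, hy⟩, _, ⟨r, hr, rfl⟩, hxy⟩ := Set.mem_iUnion.1 hx
      dsimp only at hxy
      have h := congrArg (syndrome F (s + 1)) hxy
      rw [vadd_eq_add, vadd_eq_add, map_add, map_add, syndrome_single, syndrome_hammingCodeword,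
        LinearMap.mem_ker.1 (Rcomp_le_ker_syndrome _ hr), syndrome_bar, one_smul, coe_consProj,
        add_zero, add_zero] at h
      rwa [Fin.cons_right_injective _ h] at hy
  · intro hx
    refine Or.inr (Set.mem_iUnion.2 ⟨⟨x, hx⟩, _, ⟨0, zero_mem _, rfl⟩, ?_⟩)
    simp [hammingCodeword]

end Embedding

theorem stmt12 {s : ℕ} (C : Set (Fin s → F)) (hC : IsOneCode C) :
    ∃ P : Set (PA F (s+1) → F), IsPerfect P ∧
      C = {x : Fin s → F | bar (Fin.cons 1 x) ∈ P} :=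
  ⟨switchedHammingCode C, isPerfect_switchedHammingCode hC,
    Set.ext fun x => (bar_cons_mem_switchedHammingCode_iff x).symm⟩
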